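/- Under the hypotheses of the previous decomposition (Q = q + β(ν⊗ν − (1/2)Πₛ) surface conforming, with q additionally satisfying q² = (Tr q²/2)·Πₛ), the Q-tensor part of Q² satisfies Q² − (Tr Q²/3)·Id = −β q + ((β²/2) − (Tr q²)/3)·(ν⊗ν − (1/2)Πₛ). -/
import Mathlib


open Matrix

theorem conforming_square_qtensor_part
    (ν : Fin 3 → ℝ) (hν : ∑ i, ν i ^ 2 = 1)
    (q : Matrix (Fin 3) (Fin 3) ℝ) (hq : qᵀ = q) (hqtr : q.trace = 0)
    (hqν : q.mulVec ν = 0)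
    (hproj : (1 - vecMulVec ν ν) * q * (1 - vecMulVec ν ν) = q)
    (hqsq : q * q = ((q * q).trace / 2) • ((1 : Matrix (Fin 3) (Fin 3) ℝ) - vecMulVec ν ν))
    (β : ℝ) :
    letI Ps : Matrix (Fin 3) (Fin 3) ℝ := 1 - vecMulVec ν ν
    letI Q : Matrix (Fin 3) (Fin 3) ℝ := q + β • (vecMulVec ν ν - (1 / 2 : ℝ) • Ps)
    Q * Q - ((Q * Q).trace / 3) • (1 : Matrix (Fin 3) (Fin 3) ℝ) =
      (-β) • q + (β ^ 2 / 2 - (q * q).trace / 3) • (vecMulVec ν ν - (1 / 2 : ℝ) • Ps) := by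
  set N : Matrix (Fin 3) (Fin 3) ℝ := vecMulVec ν ν with hN
  have hNN : N * N = N := by
    ext i j
    simp only [hN, Matrix.mul_apply, vecMulVec_apply]
    have : ∀ k, ν i * ν k * (ν k * ν j) = (ν i * ν j) * ν k ^ 2 := by intro k; ring
    simp_rw [this]
    rw [← Finset.mul_sum, hν, mul_one]
  have hqN : q * N = 0 := by
    ext i j
    simp only [hN, Matrix.mul_apply, vecMulVec_apply, Matrix.zero_apply]
    have : ∀ k, q i k * (ν k * ν j) = (q i k * ν k) * ν j := by intro k; ring
    simp_rw [this]
    rw [← Finset.sum_mul]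
    have := congrFun hqν i
    simp only [Matrix.mulVec, dotProduct, Pi.zero_apply] at this
    rw [this, zero_mul]
  have hNq : N * q = 0 := by
    have hNT : Nᵀ = N := by
      ext i j; simp [hN, vecMulVec_apply, mul_comm]
    have : (N * q)ᵀ = 0 := by rw [Matrix.transpose_mul, hq, hNT, hqN]
    calc N * q = ((N * q)ᵀ)ᵀ := by rw [Matrix.transpose_transpose]
    _ = 0 := by rw [this]; simp
  have htrN : N.trace = 1 := by
    simp only [hN, Matrix.trace, Matrix.diag, vecMulVec_apply]
    rw [← hν]; exact Finset.sum_congr rfl fun i _ => (sq (ν i)).symm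
  set t : ℝ := (q * q).trace with ht
  have hQQ : (q + β • (N - (1 / 2 : ℝ) • (1 - N))) * (q + β • (N - (1 / 2 : ℝ) • (1 - N)))
      = (-β) • q + (t / 2) • (1 : Matrix (Fin 3) (Fin 3) ℝ) - (t / 2) • N
        + (3 * β ^ 2 / 4) • N + (β ^ 2 / 4) • (1 : Matrix (Fin 3) (Fin 3) ℝ) := by
    simp only [mul_add, add_mul, smul_mul_assoc, mul_smul_comm, sub_mul, mul_sub,
      smul_smul, one_mul, mul_one, hNN, hqN, hNq, hqsq, ← ht, smul_sub, smul_zero,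
      zero_sub, sub_zero, zero_mul, mul_zero]
    module
  show (q + β • (N - (1 / 2 : ℝ) • (1 - N))) * (q + β • (N - (1 / 2 : ℝ) • (1 - N)))
      - (((q + β • (N - (1 / 2 : ℝ) • (1 - N))) * (q + β • (N - (1 / 2 : ℝ) • (1 - N)))).trace / 3)
        • (1 : Matrix (Fin 3) (Fin 3) ℝ)
      = (-β) • q + (β ^ 2 / 2 - t / 3) • (N - (1 / 2 : ℝ) • (1 - N))
  rw [hQQ]
  have htr : ((-β) • q + (t / 2) • (1 : Matrix (Fin 3) (Fin 3) ℝ) - (t / 2) • N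
        + (3 * β ^ 2 / 4) • N + (β ^ 2 / 4) • (1 : Matrix (Fin 3) (Fin 3) ℝ)).trace
      = t + 3 * β ^ 2 / 2 := by
    simp only [Matrix.trace_add, Matrix.trace_sub, Matrix.trace_smul, htrN, hqtr,
      Matrix.trace_one]
    simp [Fintype.card_fin, smul_eq_mul]
    ring
  rw [htr]
  module
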